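/- Fixed points are first-order critical: Let α ≥ 0 and G ∈ O(d)^{⊗n}. If G is a fixed point of T_α (i.e. G ∈ T_α(G)), then G is a first-order critical point of (QP), i.e. C_iᵀ G = G_i Gᵀ C_i G_i for each i ∈ [n]. -/

import Mathlib

open Matrix BigOperators

noncomputable section
namespace GroupSync

variable {n d : ℕ}

/-- The positive semidefinite square root of a positive semidefinite matrix (the definition
of `Matrix.PosSemidef.sqrt` in the older Mathlib, since removed). -/
def _root_.Matrix.PosSemidef.sqrt {m : Type*} [Fintype m] [DecidableEq m] {A : Matrix m m ℝ}
    (hA : A.PosSemidef) : Matrix m m ℝ :=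
  (hA.1.eigenvectorUnitary : Matrix m m ℝ) * diagonal (Real.sqrt ∘ hA.1.eigenvalues) *
    (star hA.1.eigenvectorUnitary : Matrix m m ℝ)

/-- `Aᵀ * A` is Hermitian (the older Mathlib lemma, since removed). -/
theorem _root_.Matrix.isHermitian_transpose_mul_self {m k : Type*} [Fintype m]
    (A : Matrix m k ℝ) : (Aᵀ * A).IsHermitian := by
  simpa using Matrix.isHermitian_conjTranspose_mul_self A

/-- Frobenius norm of a real matrix. -/
def frob {m k : Type*} [Fintype m] [Fintype k] (X : Matrix m k ℝ) : ℝ :=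
  Real.sqrt (∑ i, ∑ j, (X i j) ^ 2)

/-- Spectral (operator) norm of a real matrix: the operator norm of the induced
linear map between Euclidean spaces. -/
def spec {m k : Type*} [Fintype m] [Fintype k] [DecidableEq k] (X : Matrix m k ℝ) : ℝ :=
  ‖LinearMap.toContinuousLinearMap (Matrix.toEuclideanLin X)‖

/-- Nuclear norm: trace of the positive semidefinite square root of `X * Xᵀ`
(i.e. the sum of the singular values of `X`). -/
def nuclear {m k : Type*} [Fintype m] [Fintype k] [DecidableEq m] (X : Matrix m k ℝ) : ℝ :=
  (Matrix.posSemidef_self_mul_conjTranspose X).sqrt.trace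

/-- The positive semidefinite square root of `X * Xᵀ`. -/
def psdSqrtMulT {m k : Type*} [Fintype m] [Fintype k] [DecidableEq m] (X : Matrix m k ℝ) :
    Matrix m m ℝ :=
  (Matrix.posSemidef_self_mul_conjTranspose X).sqrt

/-- Membership in the orthogonal group `O(d)`. -/
def IsOd (g : Matrix (Fin d) (Fin d) ℝ) : Prop :=
  gᵀ * g = 1 ∧ g * gᵀ = 1

/-- Membership in the special orthogonal group `SO(d)`. -/
def IsSOd (g : Matrix (Fin d) (Fin d) ℝ) : Prop :=
  IsOd g ∧ g.det = 1

/-- The `i`-th `d × d` block of an `nd × d` matrix. -/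
def blk (X : Matrix (Fin n × Fin d) (Fin d) ℝ) (i : Fin n) : Matrix (Fin d) (Fin d) ℝ :=
  Matrix.of fun a b => X (i, a) b

/-- Membership in `O(d)^{⊗n}`: every `d × d` block is orthogonal. -/
def OdN (G : Matrix (Fin n × Fin d) (Fin d) ℝ) : Prop :=
  ∀ i : Fin n, IsOd (blk G i)

/-- Membership in `SO(d)^{⊗n}`. -/
def SOdN (G : Matrix (Fin n × Fin d) (Fin d) ℝ) : Prop :=
  ∀ i : Fin n, IsSOd (blk G i)

/-- The `i`-th block column (an `nd × d` matrix) of an `nd × nd` matrix. -/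
def bcol (M : Matrix (Fin n × Fin d) (Fin n × Fin d) ℝ) (i : Fin n) :
    Matrix (Fin n × Fin d) (Fin d) ℝ :=
  Matrix.of fun p b => M p (i, b)

/-- The `ij`-th `d × d` block of an `nd × nd` matrix. -/
def dblk (M : Matrix (Fin n × Fin d) (Fin n × Fin d) ℝ) (i j : Fin n) :
    Matrix (Fin d) (Fin d) ℝ :=
  Matrix.of fun a b => M (i, a) (j, b)

/-- `G' ∈ T_α(G)` (where `Ct = C + α I`): `G' ∈ O(d)^{⊗n}` and each block `G'_i` is a
nearest point of `C̃ᵢᵀ G` in `O(d)` w.r.t. the Frobenius norm. -/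
def InT (Ct : Matrix (Fin n × Fin d) (Fin n × Fin d) ℝ)
    (G G' : Matrix (Fin n × Fin d) (Fin d) ℝ) : Prop :=
  OdN G' ∧ ∀ i : Fin n, ∀ X : Matrix (Fin d) (Fin d) ℝ, IsOd X →
    frob (blk G' i - (bcol Ct i)ᵀ * G) ≤ frob (X - (bcol Ct i)ᵀ * G)

/-- `G' ∈ ST_α(G)`: the `SO(d)` analogue of `InT`. -/
def InST (Ct : Matrix (Fin n × Fin d) (Fin n × Fin d) ℝ)
    (G G' : Matrix (Fin n × Fin d) (Fin d) ℝ) : Prop :=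
  SOdN G' ∧ ∀ i : Fin n, ∀ X : Matrix (Fin d) (Fin d) ℝ, IsSOd X →
    frob (blk G' i - (bcol Ct i)ᵀ * G) ≤ frob (X - (bcol Ct i)ᵀ * G)

/-- The quotient distance `d(X, Y) = min_{g ∈ O(d)} ‖X − Y g‖_F`. -/
def dOrth (X Y : Matrix (Fin n × Fin d) (Fin d) ℝ) : ℝ :=
  ⨅ g : {g : Matrix (Fin d) (Fin d) ℝ // IsOd g}, frob (X - Y * g.1)

/-- The objective function `f(G) = tr(Gᵀ C G)`. -/
def obj (C : Matrix (Fin n × Fin d) (Fin n × Fin d) ℝ)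
    (G : Matrix (Fin n × Fin d) (Fin d) ℝ) : ℝ :=
  Matrix.trace (Gᵀ * C * G)

/-- Hadamard (entrywise) product. -/
def had {m k : Type*} (X Y : Matrix m k ℝ) : Matrix m k ℝ :=
  Matrix.of fun p q => X p q * Y p q

/-- `W ⊗ (1_d 1_dᵀ)`, the Kronecker product of `W` with the all-ones `d × d` matrix. -/
def kron1 (W : Matrix (Fin n) (Fin n) ℝ) : Matrix (Fin n × Fin d) (Fin n × Fin d) ℝ :=
  Matrix.kroneckerMap (· * ·) W (Matrix.of fun (_ _ : Fin d) => (1 : ℝ))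

/-- The all-ones matrix `1_m 1_mᵀ`. -/
def onesMat (m : Type*) : Matrix m m ℝ :=
  Matrix.of fun _ _ => (1 : ℝ)

/-- `symblockdiag`: symmetrize the diagonal `d × d` blocks, zero out all other blocks. -/
def sbd (X : Matrix (Fin n × Fin d) (Fin n × Fin d) ℝ) :
    Matrix (Fin n × Fin d) (Fin n × Fin d) ℝ :=
  Matrix.of fun p q => if p.1 = q.1 then (X p q + X (p.1, q.2) (q.1, p.2)) / 2 else 0

/-- `S(G) = symblockdiag(C G Gᵀ) − C`. -/
def Smat (C : Matrix (Fin n × Fin d) (Fin n × Fin d) ℝ)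
    (G : Matrix (Fin n × Fin d) (Fin d) ℝ) : Matrix (Fin n × Fin d) (Fin n × Fin d) ℝ :=
  sbd (C * (G * Gᵀ)) - C

/-- `G` is a second-order critical point of (QP): `S(G) G = 0` and
`⟨H, S(G) H⟩ ≥ 0` for all tangent directions `H` (blockwise `Hᵢ Gᵢᵀ` skew-symmetric). -/
def IsSOC (C : Matrix (Fin n × Fin d) (Fin n × Fin d) ℝ)
    (G : Matrix (Fin n × Fin d) (Fin d) ℝ) : Prop :=
  Smat C G * G = 0 ∧
  ∀ H : Matrix (Fin n × Fin d) (Fin d) ℝ,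
    (∀ i : Fin n, (blk H i * (blk G i)ᵀ)ᵀ = -(blk H i * (blk G i)ᵀ)) →
    0 ≤ Matrix.trace (Hᵀ * (Smat C G * H))

/-- Smallest singular value of a square matrix, as the minimum of `‖M v‖` over
unit vectors `v`. -/
def sigmaMin (M : Matrix (Fin d) (Fin d) ℝ) : ℝ :=
  ⨅ v : {v : Fin d → ℝ // ∑ a, (v a) ^ 2 = 1}, Real.sqrt (∑ a, (M.mulVec v.1 a) ^ 2)

/-- The singular values of a square matrix: square roots of the eigenvalues of `Mᵀ M`. -/
def singVal (M : Matrix (Fin d) (Fin d) ℝ) (l : Fin d) : ℝ :=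
  Real.sqrt ((Matrix.isHermitian_transpose_mul_self M).eigenvalues l)

/-- Smallest eigenvalue of a (symmetric) matrix, as the minimum Rayleigh quotient
over unit vectors. -/
def lambdaMin {m : Type*} [Fintype m] (M : Matrix m m ℝ) : ℝ :=
  ⨅ v : {v : m → ℝ // ∑ i, (v i) ^ 2 = 1}, v.1 ⬝ᵥ M.mulVec v.1

/-- `D_α(G)`: block diagonal of the psd square roots of `(C̃ᵢᵀ G)(C̃ᵢᵀ G)ᵀ`, minus `C̃`. -/
def Dmat (Ct : Matrix (Fin n × Fin d) (Fin n × Fin d) ℝ)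
    (G : Matrix (Fin n × Fin d) (Fin d) ℝ) : Matrix (Fin n × Fin d) (Fin n × Fin d) ℝ :=
  (Matrix.of fun p q =>
    if p.1 = q.1 then psdSqrtMulT ((bcol Ct p.1)ᵀ * G) p.2 q.2 else 0) - Ct

/-- The residual function `ρ_α(G) = ‖D_α(G) G‖_F`. -/
def rho (Ct : Matrix (Fin n × Fin d) (Fin n × Fin d) ℝ)
    (G : Matrix (Fin n × Fin d) (Fin d) ℝ) : ℝ :=
  frob (Dmat Ct G * G)

/-- Blockwise infinity norm: `‖X‖_∞ = max_i ‖X_i‖` (spectral norm of the blocks). -/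
def binf (X : Matrix (Fin n × Fin d) (Fin d) ℝ) : ℝ :=
  ⨆ i : Fin n, spec (blk X i)

/-! Because `‖X‖_F² = d` on `O(d)`, a nearest point `gᵢ` of `B = C̃ᵢᵀ G` in `O(d)` maximises
`X ↦ tr (Xᵀ B)`; writing `X = Q gᵢ`, the identity maximises `Q ↦ tr (Qᵀ B gᵢᵀ)`, and testing
against plane rotations shows that `B gᵢᵀ` is symmetric, i.e. `B = gᵢ Bᵀ gᵢ`. At a fixed point
`gᵢ = Gᵢ` and `B = Cᵢᵀ G + α Gᵢ`; the shift `α Gᵢ` satisfies the same identity and cancels. -/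

lemma isOd_iff_mem_orthogonalGroup {g : Matrix (Fin d) (Fin d) ℝ} :
    IsOd g ↔ g ∈ orthogonalGroup (Fin d) ℝ :=
  ⟨fun h => (mem_orthogonalGroup_iff _ _).2 h.2,
    fun h => ⟨(mem_orthogonalGroup_iff' _ _).1 h, (mem_orthogonalGroup_iff _ _).1 h⟩⟩

lemma IsOd.mul {g h : Matrix (Fin d) (Fin d) ℝ} (hg : IsOd g) (hh : IsOd h) : IsOd (g * h) :=
  isOd_iff_mem_orthogonalGroup.2 <|
    mul_mem (isOd_iff_mem_orthogonalGroup.1 hg) (isOd_iff_mem_orthogonalGroup.1 hh)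

lemma IsOd.trace_transpose_mul_self {g : Matrix (Fin d) (Fin d) ℝ} (hg : IsOd g) :
    trace (gᵀ * g) = d := by
  simp [hg.1]

lemma frob_sq {m k : Type*} [Fintype m] [Fintype k] (X : Matrix m k ℝ) :
    frob X ^ 2 = trace (Xᵀ * X) := by
  rw [frob, Real.sq_sqrt (by positivity), trace, Finset.sum_comm]
  simp [mul_apply, sq]

/-- Rotation by the angle with cosine `x` and sine `y` in the coordinate plane spanned by
`a` and `b`. -/
def planeRotation (a b : Fin d) (x y : ℝ) : Matrix (Fin d) (Fin d) ℝ :=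
  1 + (x - 1) • (single a a 1 + single b b 1) + y • (single a b 1 - single b a 1)

lemma isOd_planeRotation {a b : Fin d} (hab : a ≠ b) {x y : ℝ} (hxy : x ^ 2 + y ^ 2 = 1) :
    IsOd (planeRotation a b x y) := by
  set P : Matrix (Fin d) (Fin d) ℝ := single a a 1 + single b b 1
  set K : Matrix (Fin d) (Fin d) ℝ := single a b 1 - single b a 1
  have hPP : P * P = P := by
    simp [P, add_mul, mul_add, single_mul_single_of_ne _ _ _ _ hab,
      single_mul_single_of_ne _ _ _ _ hab.symm]
  have hKK : K * K = -P := by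
    simp [P, K, sub_mul, mul_sub, single_mul_single_of_ne _ _ _ _ hab,
      single_mul_single_of_ne _ _ _ _ hab.symm]
    abel
  have hPK : P * K = K := by
    simp [P, K, add_mul, mul_sub, single_mul_single_of_ne _ _ _ _ hab,
      single_mul_single_of_ne _ _ _ _ hab.symm]
  have hKP : K * P = K := by
    simp [P, K, sub_mul, mul_add, single_mul_single_of_ne _ _ _ _ hab,
      single_mul_single_of_ne _ _ _ _ hab.symm]
    abel
  have hPt : Pᵀ = P := by simp [P, transpose_single]
  have hKt : Kᵀ = -K := by simp [K, transpose_single]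
  have hQt : (1 + (x - 1) • P + y • K)ᵀ = 1 + (x - 1) • P - y • K := by
    rw [transpose_add, transpose_add, transpose_smul, transpose_smul, transpose_one, hPt, hKt,
      smul_neg, ← sub_eq_add_neg]
  refine isOd_iff_mem_orthogonalGroup.2 ((mem_orthogonalGroup_iff _ _).2 ?_)
  change (1 + (x - 1) • P + y • K) * (1 + (x - 1) • P + y • K)ᵀ = 1
  rw [hQt]
  have hcoeff : (x - 1) + (x - 1) + (x - 1) * (x - 1) + y * y = 0 := by linear_combination hxy
  calc (1 + (x - 1) • P + y • K) * (1 + (x - 1) • P - y • K)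
      = 1 + ((x - 1) + (x - 1) + (x - 1) * (x - 1) + y * y) • P := by
        simp only [mul_add, add_mul, mul_sub, sub_mul, one_mul, mul_one, Matrix.smul_mul,
          Matrix.mul_smul, hPP, hKK, hPK, hKP, smul_smul, smul_neg]
        module
    _ = 1 := by rw [hcoeff, zero_smul, add_zero]

lemma trace_planeRotation_transpose_mul (a b : Fin d) (x y : ℝ) (N : Matrix (Fin d) (Fin d) ℝ) :
    trace ((planeRotation a b x y)ᵀ * N)
      = trace N + (x - 1) * (N a a + N b b) + y * (N a b - N b a) := by
  simp [planeRotation, transpose_single, add_mul, sub_mul, trace_single_mul]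
  ring

lemma transpose_eq_self_of_trace_le {N : Matrix (Fin d) (Fin d) ℝ}
    (h : ∀ Q : Matrix (Fin d) (Fin d) ℝ, IsOd Q → trace (Qᵀ * N) ≤ trace N) : Nᵀ = N := by
  ext b a
  rw [transpose_apply]
  by_contra hne
  have hab : a ≠ b := by rintro rfl; exact hne rfl
  set c := N a a + N b b
  set s := N a b - N b a
  have hs : 0 < s ^ 2 := by have := sub_ne_zero.2 hne; positivity
  set r := Real.sqrt (c ^ 2 + s ^ 2)
  have hr : 0 < r := Real.sqrt_pos.2 (by positivity)
  have hr2 : r ^ 2 = c ^ 2 + s ^ 2 := Real.sq_sqrt (by positivity)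
  -- the rotation by the angle of `(c, s)` gains `r - c` over the identity
  have hrot := h _ (isOd_planeRotation hab (x := c / r) (y := s / r) (by field_simp; linarith))
  rw [trace_planeRotation_transpose_mul] at hrot
  have hgain : (c / r - 1) * c + s / r * s = r - c := by field_simp; linarith
  nlinarith

lemma trace_transpose_mul_le_of_frob_sub_le {X Y B : Matrix (Fin d) (Fin d) ℝ}
    (hX : IsOd X) (hY : IsOd Y) (h : frob (Y - B) ≤ frob (X - B)) :
    trace (Xᵀ * B) ≤ trace (Yᵀ * B) := by
  have hsq : frob (Y - B) ^ 2 ≤ frob (X - B) ^ 2 := pow_le_pow_left₀ (Real.sqrt_nonneg _) h 2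
  have expand : ∀ Z : Matrix (Fin d) (Fin d) ℝ, IsOd Z →
      frob (Z - B) ^ 2 = d - 2 * trace (Zᵀ * B) + trace (Bᵀ * B) := by
    intro Z hZ
    rw [frob_sq, transpose_sub, sub_mul, mul_sub, mul_sub, trace_sub, trace_sub, trace_sub,
      hZ.trace_transpose_mul_self, ← trace_transpose (Bᵀ * Z), transpose_mul, transpose_transpose]
    ring
  rw [expand X hX, expand Y hY] at hsq
  linarith

lemma eq_mul_transpose_mul_of_forall_frob_le {B g : Matrix (Fin d) (Fin d) ℝ} (hg : IsOd g)
    (hmin : ∀ X : Matrix (Fin d) (Fin d) ℝ, IsOd X → frob (g - B) ≤ frob (X - B)) :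
    B = g * Bᵀ * g := by
  have hmax : ∀ Q : Matrix (Fin d) (Fin d) ℝ, IsOd Q → trace (Qᵀ * (B * gᵀ)) ≤ trace (B * gᵀ) := by
    intro Q hQ
    have := trace_transpose_mul_le_of_frob_sub_le (hQ.mul hg) hg (hmin _ (hQ.mul hg))
    rwa [transpose_mul, Matrix.mul_assoc, trace_mul_comm gᵀ, trace_mul_comm gᵀ,
      Matrix.mul_assoc] at this
  have hsymm : (B * gᵀ)ᵀ = B * gᵀ := transpose_eq_self_of_trace_le hmax
  calc B = B * gᵀ * g := by rw [Matrix.mul_assoc, hg.1, Matrix.mul_one]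
    _ = (B * gᵀ)ᵀ * g := by rw [hsymm]
    _ = g * Bᵀ * g := by rw [transpose_mul, transpose_transpose]

lemma transpose_bcol_add_smul_one_mul (C : Matrix (Fin n × Fin d) (Fin n × Fin d) ℝ) (α : ℝ)
    (G : Matrix (Fin n × Fin d) (Fin d) ℝ) (i : Fin n) :
    (bcol (C + α • 1) i)ᵀ * G = (bcol C i)ᵀ * G + α • blk G i := by
  ext c b
  simp [mul_apply, one_apply, bcol, blk, add_mul, ite_mul, Finset.sum_add_distrib]

theorem fixed_point_is_first_order_critical_general {n d : ℕ}
    (C : Matrix (Fin n × Fin d) (Fin n × Fin d) ℝ)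
    (α : ℝ)
    (Ct : Matrix (Fin n × Fin d) (Fin n × Fin d) ℝ)
    (hCt : Ct = C + α • (1 : Matrix (Fin n × Fin d) (Fin n × Fin d) ℝ))
    (G : Matrix (Fin n × Fin d) (Fin d) ℝ) (hG : OdN G)
    (hfix : InT Ct G G) :
    ∀ i : Fin n, (bcol C i)ᵀ * G = blk G i * (Gᵀ * bcol C i) * blk G i := by
  intro i
  set g := blk G i
  set A := (bcol C i)ᵀ * G
  have hfixed : A + α • g = g * (A + α • g)ᵀ * g := by
    rw [← transpose_bcol_add_smul_one_mul, ← hCt]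
    exact eq_mul_transpose_mul_of_forall_frob_le (hG i) (hfix.2 i)
  have hshift : g * (α • g)ᵀ * g = α • g := by
    rw [transpose_smul, Matrix.mul_smul, Matrix.smul_mul, (hG i).2, Matrix.one_mul]
  rw [transpose_add, Matrix.mul_add, Matrix.add_mul, hshift] at hfixed
  rw [← transpose_transpose (bcol C i), ← transpose_mul]
  exact add_right_cancel hfixed

/-- fixed points are first-order critical.
For `α ≥ 0`, `C` symmetric and `G ∈ O(d)^{⊗n}` with `C̃ = C + α I`:
if `G ∈ T_α(G)`, then `G` is a first-order critical point of (QP),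
i.e. `Cᵢᵀ G = Gᵢ Gᵀ Cᵢ Gᵢ` for all `i`. -/
theorem fixed_point_is_first_order_critical {n d : ℕ}
    (C : Matrix (Fin n × Fin d) (Fin n × Fin d) ℝ) (hCsymm : Cᵀ = C)
    (α : ℝ) (hα : 0 ≤ α)
    (Ct : Matrix (Fin n × Fin d) (Fin n × Fin d) ℝ)
    (hCt : Ct = C + α • (1 : Matrix (Fin n × Fin d) (Fin n × Fin d) ℝ))
    (G : Matrix (Fin n × Fin d) (Fin d) ℝ) (hG : OdN G)
    (hfix : InT Ct G G) :
    ∀ i : Fin n, (bcol C i)ᵀ * G = blk G i * (Gᵀ * bcol C i) * blk G i :=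
  fixed_point_is_first_order_critical_general C α Ct hCt G hG hfix

end GroupSync
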